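/- Let t, r, χ be integers with t ≤ -2, r < 0, and r + t + 2 < χ. Define the rational numbers TB = (t - 1) + (-t^2)/(t + 1) and ROT = (r + 1) - (r·t)/(t + 1). Then -|TB| + |ROT| > -χ / |t + 1|. -/

import Mathlib

/-! With `u = t + 1 < 0` the two quantities simplify to `TB = -1/u` and `ROT = (r + u)/u`, both
positive. Removing the absolute values and multiplying by `u < 0`, the inequality becomes
`1 + r + u < χ`, which is the hypothesis `r + t + 2 < χ`. -/

section

variable {K : Type*} [Field K]

lemma sub_one_add_neg_sq_div_add_one {t : K} (ht : t + 1 ≠ 0) :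
    (t - 1) + -t ^ 2 / (t + 1) = -1 / (t + 1) := by
  field_simp
  ring

lemma add_one_sub_mul_div_add_one {r t : K} (ht : t + 1 ≠ 0) :
    (r + 1) - r * t / (t + 1) = (r + t + 1) / (t + 1) := by
  field_simp
  ring

variable [LinearOrder K] [IsStrictOrderedRing K]

lemma neg_abs_tb_add_abs_rot_gt {t r χ : K} (ht : t + 1 < 0) (hrt : r + t + 1 < 0)
    (hχ : r + t + 2 < χ) :
    -|(t - 1) + -t ^ 2 / (t + 1)| + |(r + 1) - r * t / (t + 1)| > -χ / |t + 1| := by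
  rw [sub_one_add_neg_sq_div_add_one ht.ne, add_one_sub_mul_div_add_one ht.ne,
    abs_of_pos (div_pos_of_neg_of_neg (by norm_num) ht), abs_of_pos (div_pos_of_neg_of_neg hrt ht),
    abs_of_neg ht, neg_div_neg_eq, ← neg_div, ← add_div, gt_iff_lt, div_lt_div_right_of_neg ht]
  linarith

end

theorem stmt_3 (t r χ : ℤ) (ht : t ≤ -2) (hr : r < 0) (hχ : r + t + 2 < χ) :
    -|((t : ℚ) - 1) + (-(t : ℚ) ^ 2) / ((t : ℚ) + 1)| +
      |((r : ℚ) + 1) - ((r : ℚ) * (t : ℚ)) / ((t : ℚ) + 1)| >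
      -(χ : ℚ) / |(t : ℚ) + 1| := by
  have ht' : (t : ℚ) ≤ -2 := by exact_mod_cast ht
  have hr' : (r : ℚ) < 0 := by exact_mod_cast hr
  have hχ' : (r : ℚ) + t + 2 < χ := by exact_mod_cast hχ
  exact neg_abs_tb_add_abs_rot_gt (by linarith) (by linarith) hχ'
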